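/- arXiv:1703.05634 — 3 statements merged into one kernel-verified Lean document; each statement's English description precedes it below -/
import Mathlib

section
/- Suppose S is an operator system and {S_k : k ∈ ℕ} is an increasing sequence of operator subsystems of S with inclusion maps i_k : S_k ⊆ S_{k+1}, such that S = ∪_{k∈ℕ} S_k. Then S is (unitally completely order isomorphic to) the inductive limit of the inductive sequence {S_k, i_k : k ∈ ℕ}. -/
open scoped ComplexOrder TensorProduct

noncomputable section

/-- Conjugation `a A a*` of a matrix `A` over a complex `*`-vector space by a complex
scalar matrix `a`. -/
def matCong {V : Type} [AddCommGroup V] [Module ℂ V] {ι κ : Type} [Fintype κ]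
    (a : Matrix ι κ ℂ) (A : Matrix κ κ V) : Matrix ι ι V :=
  Matrix.of fun i j => ∑ s : κ, ∑ t : κ, (a i s * star (a j t)) • A s t

/-- The `n × n` matrix with a given element `e` on the diagonal and `0` elsewhere. -/
def unitMat {V : Type} [AddCommGroup V] (e : V) (n : ℕ) : Matrix (Fin n) (Fin n) V :=
  Matrix.of fun i j => if i = j then e else 0

/-- The `1 × 1` matrix with entry `x`. -/
def oneMat {V : Type} (x : V) : Matrix (Fin 1) (Fin 1) V :=
  Matrix.of fun _ _ => x

/-- A matrix ordered `*`-vector space with a distinguished matrix order unit: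
`pos n` is the cone in `Mₙ(V)` and `one` is the order unit.  The axioms making such
data an (abstract) operator system are collected in `PreOS.IsOpSys`. -/
structure PreOS : Type 1 where
  V : Type
  [grp : AddCommGroup V]
  [mod : Module ℂ V]
  [sam : StarAddMonoid V]
  [smod : StarModule ℂ V]
  pos : ∀ n : ℕ, Set (Matrix (Fin n) (Fin n) V)
  one : V

attribute [instance] PreOS.grp PreOS.mod PreOS.sam PreOS.smod

/-- The axioms of an operator system: a matrix ordered `*`-vector space with a proper
matrix ordering and an Archimedean matrix order unit. -/
structure PreOS.IsOpSys (P : PreOS) : Prop where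
  star_mem : ∀ n, ∀ A ∈ P.pos n, star A = A
  add_mem : ∀ n, ∀ A ∈ P.pos n, ∀ B ∈ P.pos n, A + B ∈ P.pos n
  smul_mem : ∀ n, ∀ A ∈ P.pos n, ∀ r : ℝ, 0 ≤ r → (r : ℂ) • A ∈ P.pos n
  cong_mem : ∀ (m n : ℕ) (a : Matrix (Fin m) (Fin n) ℂ), ∀ A ∈ P.pos n,
    matCong a A ∈ P.pos m
  proper : ∀ n, ∀ A ∈ P.pos n, -A ∈ P.pos n → A = 0
  star_one : star P.one = P.one
  one_mem : ∀ n, unitMat P.one n ∈ P.pos n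
  orderUnit : ∀ n (A : Matrix (Fin n) (Fin n) P.V), star A = A →
    ∃ r : ℝ, 0 < r ∧ (r : ℂ) • unitMat P.one n + A ∈ P.pos n
  arch : ∀ n (A : Matrix (Fin n) (Fin n) P.V), star A = A →
    (∀ ε : ℝ, 0 < ε → (ε : ℂ) • unitMat P.one n + A ∈ P.pos n) → A ∈ P.pos n

/-- A unital self-adjoint (`*`-preserving) linear map between matrix ordered spaces;
this is the underlying data of a unital completely positive map. -/
structure LinSU (P Q : PreOS) where
  toLin : P.V →ₗ[ℂ] Q.V
  map_star : ∀ x, toLin (star x) = star (toLin x)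
  map_one : toLin P.one = Q.one

/-- A unital completely positive map between matrix ordered `*`-vector spaces. -/
structure UCPmap (P Q : PreOS) extends LinSU P Q where
  map_pos : ∀ n, ∀ A ∈ P.pos n, A.map toLin ∈ Q.pos n

/-- The identity unital self-adjoint map. -/
def idLinSU (P : PreOS) : LinSU P P :=
  ⟨LinearMap.id, fun _ => rfl, rfl⟩

/-- A unital complete order monomorphism: injective and completely order reflecting. -/
structure IsCOMono {P Q : PreOS} (f : UCPmap P Q) : Prop where
  inj : Function.Injective f.toLin
  reflect : ∀ n (A : Matrix (Fin n) (Fin n) P.V), A.map f.toLin ∈ Q.pos n → A ∈ P.pos n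

/-! ## Operator subsystems -/

/-- A star-closed subspace containing the order unit: the data of an operator subsystem. -/
structure StarSubmodule (P : PreOS) where
  toSub : Submodule ℂ P.V
  star_mem' : ∀ x ∈ toSub, star x ∈ toSub
  one_mem' : P.one ∈ toSub

/-- The operator subsystem determined by a star-closed subspace containing the unit,
with the induced matrix cones. -/
def SubOS (P : PreOS) (W : StarSubmodule P) : PreOS :=
  letI : StarAddMonoid W.toSub :=
    { star := fun x => ⟨star x.1, W.star_mem' x.1 x.2⟩
      star_involutive := fun x => Subtype.ext (star_star x.1)
      star_add := fun x y => Subtype.ext (star_add x.1 y.1) }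
  letI : StarModule ℂ W.toSub := ⟨fun c x => Subtype.ext (star_smul c x.1)⟩
  { V := W.toSub
    pos := fun n => {A | A.map W.toSub.subtype ∈ P.pos n}
    one := ⟨P.one, W.one_mem'⟩ }

/-- The inclusion of a smaller operator subsystem into a bigger one. -/
def inclSub (P : PreOS) (W1 W2 : StarSubmodule P) (h : W1.toSub ≤ W2.toSub) :
    LinSU (SubOS P W1) (SubOS P W2) where
  toLin := Submodule.inclusion h
  map_star := fun _ => rfl
  map_one := rfl

/-- The inclusion of an operator subsystem into the ambient system. -/
def subVal (P : PreOS) (W : StarSubmodule P) : LinSU (SubOS P W) P where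
  toLin := W.toSub.subtype
  map_star := fun _ => rfl
  map_one := rfl

/-! ## The inductive limit construction -/

variable (S : ℕ → PreOS) (φ : ∀ k, LinSU (S k) (S (k + 1)))

/-- The space `S'` of eventually coherent sequences. -/
def coh : Submodule ℂ (∀ k, (S k).V) where
  carrier := {x | ∃ k0, ∀ k, k0 ≤ k → x (k + 1) = (φ k).toLin (x k)}
  zero_mem' := ⟨0, fun k _ => by simp⟩
  add_mem' := by
    rintro x y ⟨a, ha⟩ ⟨b, hb⟩
    exact ⟨max a b, fun k hk => by
      simp [ha k (le_trans (le_max_left a b) hk), hb k (le_trans (le_max_right a b) hk)]⟩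
  smul_mem' := by
    rintro c x ⟨a, ha⟩
    exact ⟨a, fun k hk => by simp [ha k hk]⟩

instance cohSAM : StarAddMonoid (coh S φ) where
  star x := ⟨star x.1, by
    obtain ⟨k0, h⟩ := x.2
    exact ⟨k0, fun k hk => by
      rw [Pi.star_apply, Pi.star_apply, h k hk, (φ k).map_star]⟩⟩
  star_involutive x := Subtype.ext (star_star x.1)
  star_add x y := Subtype.ext (star_add x.1 y.1)

instance cohSMod : StarModule ℂ (coh S φ) := ⟨fun c x => Subtype.ext (star_smul c x.1)⟩

@[simp] lemma coh_star_coe (x : coh S φ) :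
    ((star x : coh S φ) : ∀ k, (S k).V) = star (x : ∀ k, (S k).V) := rfl

/-- The subspace `K` of eventually zero (coherent) sequences. -/
def evK : Submodule ℂ (coh S φ) where
  carrier := {x | ∃ k0, ∀ k, k0 ≤ k → x.1 k = 0}
  zero_mem' := ⟨0, fun k _ => rfl⟩
  add_mem' := by
    rintro x y ⟨a, ha⟩ ⟨b, hb⟩
    exact ⟨max a b, fun k hk => by
      show x.1 k + y.1 k = 0
      rw [ha k (le_trans (le_max_left a b) hk), hb k (le_trans (le_max_right a b) hk), add_zero]⟩
  smul_mem' := by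
    rintro c x ⟨a, ha⟩
    exact ⟨a, fun k hk => by
      show c • x.1 k = 0
      rw [ha k hk, smul_zero]⟩

/-- The quotient space `S'/K`. -/
abbrev Qspace := coh S φ ⧸ evK S φ

lemma evK_star {x : coh S φ} (hx : x ∈ evK S φ) : star x ∈ evK S φ := by
  obtain ⟨k0, h⟩ := hx
  exact ⟨k0, fun k hk => by
    show (star x.1) k = 0
    rw [Pi.star_apply, h k hk, star_zero]⟩

/-- The star operation on the quotient `S'/K`. -/
def qStar : Qspace S φ → Qspace S φ := fun x =>
  Quotient.liftOn' x (fun a => Submodule.Quotient.mk (star a)) (by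
    intro a b h
    have hab : a - b ∈ evK S φ := by
      rw [← Submodule.Quotient.eq, ← Submodule.Quotient.mk''_eq_mk, ← Submodule.Quotient.mk''_eq_mk]
      exact Quotient.sound' h
    refine (Submodule.Quotient.eq _).2 ?_
    rw [← star_sub]
    exact evK_star S φ hab)

lemma qStar_mk (a : coh S φ) :
    qStar S φ (Submodule.Quotient.mk a) = Submodule.Quotient.mk (star a) := rfl

instance qspaceSAM : StarAddMonoid (Qspace S φ) where
  star := qStar S φ
  star_involutive := fun x => Quotient.inductionOn' x fun a => by
    show qStar S φ (qStar S φ (Submodule.Quotient.mk a)) = Submodule.Quotient.mk a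
    rw [qStar_mk, qStar_mk, star_star]
  star_add := fun x y => Quotient.inductionOn₂' x y fun a b => by
    show qStar S φ (Submodule.Quotient.mk a + Submodule.Quotient.mk b)
      = qStar S φ (Submodule.Quotient.mk a) + qStar S φ (Submodule.Quotient.mk b)
    rw [← Submodule.Quotient.mk_add, qStar_mk, qStar_mk, qStar_mk, star_add,
      Submodule.Quotient.mk_add]

@[simp] lemma qspace_star_mk (a : coh S φ) :
    star (Submodule.Quotient.mk a : Qspace S φ) = Submodule.Quotient.mk (star a) := rfl

instance qspaceSMod : StarModule ℂ (Qspace S φ) where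
  star_smul := fun c x => Quotient.inductionOn' x fun a => by
    rw [Submodule.Quotient.mk''_eq_mk, ← Submodule.Quotient.mk_smul, qspace_star_mk,
      qspace_star_mk, star_smul, Submodule.Quotient.mk_smul]

/-- The connecting maps `φ_{k,l} : S_k → S_l` of an inductive sequence. -/
def towerFun (k l : ℕ) (h : k ≤ l) (x : (S k).V) : (S l).V :=
  Nat.leRecOn h (fun {m} y => (φ m).toLin y) x

/-- The sequence `\hat x` associated to `x ∈ S_k`: it is `0` before position `k`,
`x` at position `k` and `φ_{k,l}(x)` afterwards. -/
def hatSeq (k : ℕ) (x : (S k).V) : ∀ l, (S l).V := fun l =>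
  if h : k ≤ l then towerFun S φ k l h x else 0

lemma hatSeq_mem (k : ℕ) (x : (S k).V) : hatSeq S φ k x ∈ coh S φ := by
  refine ⟨k, fun l hl => ?_⟩
  show hatSeq S φ k x (l + 1) = _
  rw [hatSeq, hatSeq, dif_pos hl, dif_pos (le_trans hl (Nat.le_succ l))]
  exact Nat.leRecOn_succ (C := fun m => (S m).V) (next := fun {m} y => (φ m).toLin y) hl x

/-- The canonical map `φ^{(k)} : S_k → S'/K` into the inductive limit. -/
def limCan (k : ℕ) (x : (S k).V) : Qspace S φ :=
  Submodule.Quotient.mk ⟨hatSeq S φ k x, hatSeq_mem S φ k x⟩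

/-- The set `D_n` of hermitian matrices over `S'` which are eventually coherent and
eventually positive. -/
def preD (n : ℕ) : Set (Matrix (Fin n) (Fin n) (coh S φ)) :=
  {A | star A = A ∧ ∃ k0, ∀ k, k0 ≤ k →
    (∀ i j, (A i j).1 (k + 1) = (φ k).toLin ((A i j).1 k)) ∧
    (Matrix.of fun i j => (A i j).1 k) ∈ (S k).pos n}

/-- The matrix cones `M_n(S'/K)^+ = q_n(D_n)` on the quotient (before
Archimedeanization). -/
def quotPos (n : ℕ) : Set (Matrix (Fin n) (Fin n) (Qspace S φ)) :=
  {U | star U = U ∧ ∃ A ∈ preD S φ n,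
    ∀ i j, (Submodule.Quotient.mk (A i j) : Qspace S φ) = U i j}

/-- The order unit of the inductive limit: the class of the sequence `(1_{S_k})_k`. -/
def limOne : Qspace S φ :=
  Submodule.Quotient.mk ⟨fun k => (S k).one, ⟨0, fun k _ => ((φ k).map_one).symm⟩⟩

/-- The matrix cones of the inductive limit: the Archimedeanization of the cones
`q_n(D_n)` of the quotient `S'/K`. -/
def limPos (n : ℕ) : Set (Matrix (Fin n) (Fin n) (Qspace S φ)) :=
  {U | star U = U ∧ ∀ ε : ℝ, 0 < ε →
    (ε : ℂ) • unitMat (limOne S φ) n + U ∈ quotPos S φ n}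

/-- The inductive limit of an inductive sequence of operator systems: the
Archimedeanization of the quotient `S'/K` with cones `q_n(D_n)` and order
unit `(1_{S_k}) + K`. -/
def indLim : PreOS where
  V := Qspace S φ
  pos := limPos S φ
  one := limOne S φ

/-- `L` (an operator-system datum) "is the inductive limit" of the inductive sequence
`{S_k, φ_k}` along the compatible family `c_k : S_k → L`: the canonical map `Ψ`
from the constructed inductive limit to `L` induced by the `c_k` is a unital complete
order isomorphism. -/
def IsIndLimitOf (L : PreOS) (c : ∀ k, (S k).V → L.V) : Prop :=
  ∃ Ψ : (indLim S φ).V →ₗ[ℂ] L.V,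
    (∀ k x, Ψ (limCan S φ k x) = c k x) ∧
    Function.Bijective Ψ ∧
    Ψ (indLim S φ).one = L.one ∧
    (∀ n (U : Matrix (Fin n) (Fin n) (indLim S φ).V),
      U ∈ (indLim S φ).pos n ↔ U.map Ψ ∈ L.pos n)


section Aux3

variable {P : PreOS} {W : ℕ → StarSubmodule P}
variable (hmono : ∀ k, (W k).toSub ≤ (W (k + 1)).toSub)

/-- The family of operator subsystems. -/
abbrev SS (P : PreOS) (W : ℕ → StarSubmodule P) : ℕ → PreOS := fun k => SubOS P (W k)

/-- The family of inclusion maps. -/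
abbrev ff : ∀ k, LinSU (SS P W k) (SS P W (k + 1)) :=
  fun k => inclSub P (W k) (W (k + 1)) (hmono k)

/-- Abbreviation for the coherent-sequence space. -/
abbrev CoT := coh (SS P W) (ff hmono)

/-- The value of an element of a subsystem in the ambient system. -/
def vv {k : ℕ} (x : (SS P W k).V) : P.V := (W k).toSub.subtype x

lemma vv_inj {k : ℕ} : Function.Injective (vv (P := P) (W := W) (k := k)) :=
  fun _ _ h => Subtype.ext h

/-- The coherence witness of an element of `CoT`. -/
def cw (x : CoT hmono) :
    ∃ k0, ∀ k, k0 ≤ k → x.1 (k + 1) = (ff hmono k).toLin (x.1 k) := x.2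

/-- A coherence start index. -/
def cIdx (x : CoT hmono) : ℕ := Classical.choose (cw hmono x)

lemma cSpec (x : CoT hmono) : ∀ k, cIdx hmono x ≤ k →
    x.1 (k + 1) = (ff hmono k).toLin (x.1 k) := Classical.choose_spec (cw hmono x)

/-- The eventual value of a coherent sequence. -/
def evF (x : CoT hmono) : P.V := vv (x.1 (cIdx hmono x))

lemma ev_stable (x : CoT hmono) {k : ℕ} (hk : cIdx hmono x ≤ k) :
    vv (x.1 k) = evF hmono x := by
  induction k, hk using Nat.le_induction with
  | base => rfl
  | succ m hm ih => rw [cSpec hmono x m hm]; exact ih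

/-- The eventual-value map as a linear map. -/
def psiL : CoT hmono →ₗ[ℂ] P.V where
  toFun := evF hmono
  map_add' x y := by
    set K := max (cIdx hmono (x + y)) (max (cIdx hmono x) (cIdx hmono y)) with hK
    have h1 : vv ((x + y).1 K) = evF hmono (x + y) :=
      ev_stable hmono _ (le_max_left _ _)
    have h2 : vv (x.1 K) = evF hmono x :=
      ev_stable hmono _ (le_trans (le_max_left _ _) (le_max_right _ _))
    have h3 : vv (y.1 K) = evF hmono y :=
      ev_stable hmono _ (le_trans (le_max_right _ _) (le_max_right _ _))
    rw [← h1, ← h2, ← h3]; rfl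
  map_smul' c x := by
    show evF hmono (c • x) = (RingHom.id ℂ) c • evF hmono x
    rw [RingHom.id_apply]
    set K := max (cIdx hmono (c • x)) (cIdx hmono x) with hK
    have h1 : vv ((c • x).1 K) = evF hmono (c • x) :=
      ev_stable hmono _ (le_max_left _ _)
    have h2 : vv (x.1 K) = evF hmono x := ev_stable hmono _ (le_max_right _ _)
    rw [← h1, ← h2]; rfl

lemma psiL_star (x : CoT hmono) : psiL hmono (star x) = star (psiL hmono x) := by
  show evF hmono (star x) = star (evF hmono x)
  set K := max (cIdx hmono (star x)) (cIdx hmono x) with hK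
  have h1 : vv ((star x).1 K) = evF hmono (star x) := ev_stable hmono _ (le_max_left _ _)
  have h2 : vv (x.1 K) = evF hmono x := ev_stable hmono _ (le_max_right _ _)
  rw [← h1, ← h2]; rfl

lemma evK_le_ker : evK (SS P W) (ff hmono) ≤ LinearMap.ker (psiL hmono) := by
  rintro x ⟨k0, h0⟩
  have h1 : vv (x.1 (max (cIdx hmono x) k0)) = psiL hmono x :=
    ev_stable hmono _ (le_max_left _ _)
  have h2 : x.1 (max (cIdx hmono x) k0) = 0 := h0 _ (le_max_right _ _)
  simp only [LinearMap.mem_ker]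
  rw [← h1, h2]; rfl

lemma ker_le_evK : LinearMap.ker (psiL hmono) ≤ evK (SS P W) (ff hmono) := by
  intro x hx
  refine ⟨cIdx hmono x, fun k hk => ?_⟩
  apply vv_inj
  rw [ev_stable hmono x hk]
  exact LinearMap.mem_ker.mp hx

/-- The canonical linear map from the quotient to the ambient system. -/
def PsiL : Qspace (SS P W) (ff hmono) →ₗ[ℂ] P.V :=
  Submodule.liftQ _ (psiL hmono) (evK_le_ker hmono)

lemma PsiL_mk (a : CoT hmono) :
    PsiL hmono (Submodule.Quotient.mk a) = psiL hmono a := rfl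

lemma PsiL_inj : Function.Injective (PsiL hmono) := by
  rw [← LinearMap.ker_eq_bot]
  exact Submodule.ker_liftQ_eq_bot _ _ _ (ker_le_evK hmono)

lemma PsiL_star (u : Qspace (SS P W) (ff hmono)) :
    PsiL hmono (star u) = star (PsiL hmono u) := by
  induction u using Quotient.inductionOn' with
  | h a =>
    rw [Submodule.Quotient.mk''_eq_mk, qspace_star_mk, PsiL_mk, PsiL_mk, psiL_star]

lemma tower_val {k l : ℕ} (h : k ≤ l) (x : (SS P W k).V) :
    vv (towerFun (SS P W) (ff hmono) k l h x) = vv x := by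
  induction l, h using Nat.le_induction with
  | base => rw [towerFun, Nat.leRecOn_self]
  | succ m hm ih =>
    rw [towerFun, Nat.leRecOn_succ (C := fun m => (SS P W m).V) hm]
    exact ih

lemma PsiL_limCan (k : ℕ) (x : (SS P W k).V) :
    PsiL hmono (limCan (SS P W) (ff hmono) k x) = vv x := by
  rw [limCan, PsiL_mk]
  show evF hmono _ = vv x
  set a : CoT hmono := ⟨hatSeq (SS P W) (ff hmono) k x, hatSeq_mem _ _ k x⟩ with ha
  set K := max (cIdx hmono a) k with hK
  have h1 : vv (a.1 K) = evF hmono a := ev_stable hmono _ (le_max_left _ _)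
  have h2 : a.1 K = towerFun (SS P W) (ff hmono) k K (le_max_right _ _) x := by
    show hatSeq (SS P W) (ff hmono) k x K = _
    rw [hatSeq, dif_pos (le_max_right (cIdx hmono a) k)]
  rw [← h1, h2, tower_val]

lemma PsiL_one : PsiL hmono (limOne (SS P W) (ff hmono)) = P.one := by
  rw [limOne, PsiL_mk]
  show evF hmono _ = P.one
  exact (ev_stable hmono _ (le_refl _)).symm ▸ rfl

lemma quot_to_pos (n : ℕ) (U : Matrix (Fin n) (Fin n) (Qspace (SS P W) (ff hmono)))
    (hU : U ∈ quotPos (SS P W) (ff hmono) n) : U.map (PsiL hmono) ∈ P.pos n := by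
  obtain ⟨-, A, ⟨hAstar, k0, hA⟩, hAq⟩ := hU
  set K := max k0 (Finset.univ.sup fun p : Fin n × Fin n => cIdx hmono (A p.1 p.2)) with hKdef
  have hpos := (hA K (le_max_left _ _)).2
  have heq : U.map (PsiL hmono) = (Matrix.of fun i j => (A i j).1 K).map
      (fun x => vv (P := P) (W := W) (k := K) x) := by
    ext i j
    have hle : cIdx hmono (A i j) ≤ K :=
      le_trans (Finset.le_sup (f := fun p : Fin n × Fin n => cIdx hmono (A p.1 p.2))
        (Finset.mem_univ (i, j))) (le_max_right _ _)
    rw [Matrix.map_apply, ← hAq i j, PsiL_mk, Matrix.map_apply, Matrix.of_apply]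
    exact (ev_stable hmono _ hle).symm
  rw [heq]
  exact hpos

set_option maxHeartbeats 1000000 in
lemma pos_to_quot (n : ℕ) (U : Matrix (Fin n) (Fin n) (Qspace (SS P W) (ff hmono)))
    (hP : P.IsOpSys) (hU : U.map (PsiL hmono) ∈ P.pos n) :
    U ∈ quotPos (SS P W) (ff hmono) n := by
  have hstarU : star U = U := by
    have h1 : (star U).map (PsiL hmono) = U.map (PsiL hmono) := by
      have := hP.star_mem n _ hU
      rw [← this]
      ext i j
      rw [Matrix.map_apply, Matrix.star_apply, Matrix.star_apply, Matrix.map_apply, PsiL_star]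
    ext i j
    exact PsiL_inj hmono (congrFun (congrFun h1 i) j)
  -- choose representatives
  have hsurj := Submodule.Quotient.mk_surjective (evK (SS P W) (ff hmono))
  set a : Fin n → Fin n → CoT hmono := fun i j => Classical.choose (hsurj (U i j)) with hadef
  have hamk : ∀ i j, (Submodule.Quotient.mk (a i j) : Qspace (SS P W) (ff hmono)) = U i j :=
    fun i j => Classical.choose_spec (hsurj (U i j))
  set c : ℂ := ((1 / 2 : ℝ) : ℂ) with hc
  set B : Matrix (Fin n) (Fin n) (CoT hmono) :=
    Matrix.of (fun i j => c • (a i j + star (a j i))) with hB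
  have hBmk : ∀ i j, (Submodule.Quotient.mk (B i j) : Qspace (SS P W) (ff hmono)) = U i j := by
    intro i j
    have : (Submodule.Quotient.mk (B i j) : Qspace (SS P W) (ff hmono))
        = c • (U i j + star (U j i)) := by
      show (Submodule.Quotient.mk (c • (a i j + star (a j i)))
        : Qspace (SS P W) (ff hmono)) = _
      rw [Submodule.Quotient.mk_smul, Submodule.Quotient.mk_add, hamk, ← qspace_star_mk,
        hamk]
    rw [this]
    have hstar : star (U j i) = U i j := by
      conv_rhs => rw [← hstarU]
      exact (Matrix.star_apply U i j).symm
    rw [hstar, hc]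
    push_cast
    rw [smul_add, ← add_smul]
    norm_num
  refine ⟨hstarU, B, ⟨?_, ?_⟩, hBmk⟩
  · -- star B = B
    refine Matrix.ext fun i j => ?_
    rw [Matrix.star_apply]
    show star (c • (a j i + star (a i j))) = c • (a i j + star (a j i))
    rw [star_smul, star_add, star_star, hc, Complex.star_def, Complex.conj_ofReal, add_comm]
  · -- eventually coherent and positive
    refine ⟨Finset.univ.sup fun p : Fin n × Fin n => cIdx hmono (B p.1 p.2), fun k hk => ?_⟩
    have hle : ∀ i j, cIdx hmono (B i j) ≤ k := fun i j =>
      le_trans (Finset.le_sup (f := fun p : Fin n × Fin n => cIdx hmono (B p.1 p.2))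
        (Finset.mem_univ (i, j))) hk
    constructor
    · intro i j
      exact cSpec hmono (B i j) k (hle i j)
    · show (Matrix.of fun i j => (B i j).1 k).map ((W k).toSub.subtype) ∈ P.pos n
      have heq : (Matrix.of fun i j => (B i j).1 k).map ((W k).toSub.subtype)
          = U.map (PsiL hmono) := by
        ext i j
        show (W k).toSub.subtype ((B i j).1 k) = PsiL hmono (U i j)
        rw [← hBmk i j, PsiL_mk]
        exact ev_stable hmono _ (hle i j)
      rw [heq]
      exact hU

lemma map_star_eq (n : ℕ) (U : Matrix (Fin n) (Fin n) (Qspace (SS P W) (ff hmono))) :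
    (star U).map (PsiL hmono) = star (U.map (PsiL hmono)) := by
  ext i j
  rw [Matrix.map_apply, Matrix.star_apply, Matrix.star_apply, Matrix.map_apply, PsiL_star]

lemma map_shift (n : ℕ) (ε : ℝ) (U : Matrix (Fin n) (Fin n) (Qspace (SS P W) (ff hmono))) :
    ((ε : ℂ) • unitMat (limOne (SS P W) (ff hmono)) n + U).map (PsiL hmono)
      = (ε : ℂ) • unitMat P.one n + U.map (PsiL hmono) := by
  ext i j
  simp only [Matrix.map_apply, Matrix.add_apply, Matrix.smul_apply, map_add, map_smul]
  have : PsiL hmono (unitMat (limOne (SS P W) (ff hmono)) n i j) = unitMat P.one n i j := by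
    by_cases h : i = j
    · simp [unitMat, h, PsiL_one]
    · simp [unitMat, h]
  rw [this]

end Aux3

/-- if an operator system is the union of an increasing sequence of
operator subsystems, then it is (unitally completely order isomorphic to) the
inductive limit of that sequence along the inclusion maps. -/
theorem statement3 (P : PreOS) (hP : P.IsOpSys) (W : ℕ → StarSubmodule P)
    (hmono : ∀ k, (W k).toSub ≤ (W (k + 1)).toSub)
    (hunion : ∀ x : P.V, ∃ k, x ∈ (W k).toSub) :
    IsIndLimitOf (fun k => SubOS P (W k))
      (fun k => inclSub P (W k) (W (k + 1)) (hmono k))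
      P (fun k x => (subVal P (W k)).toLin x) := by
  refine ⟨PsiL hmono, ?_, ⟨PsiL_inj hmono, ?_⟩, PsiL_one hmono, ?_⟩
  · intro k x
    exact PsiL_limCan hmono k x
  · intro y
    obtain ⟨k, hk⟩ := hunion y
    exact ⟨limCan _ _ k ⟨y, hk⟩, PsiL_limCan hmono k ⟨y, hk⟩⟩
  · intro n U
    constructor
    · intro hU
      obtain ⟨hs, hε⟩ := hU
      apply hP.arch n
      · calc star (U.map (PsiL hmono)) = (star U).map (PsiL hmono) :=
              (map_star_eq hmono n U).symm
          _ = U.map (PsiL hmono) := by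
              exact congrArg (fun V : Matrix (Fin n) (Fin n) (Qspace (SS P W) (ff hmono)) =>
                V.map (PsiL hmono)) hs
      · intro ε hε'
        have h1 := quot_to_pos hmono n _ (hε ε hε')
        exact (congrArg (fun M => M ∈ P.pos n) (map_shift hmono n ε U)).mp h1
    · intro hpos
      have hq := pos_to_quot hmono n U hP hpos
      refine ⟨hq.1, fun ε hε => ?_⟩
      apply pos_to_quot hmono n _ hP
      refine (congrArg (fun M => M ∈ P.pos n) (map_shift hmono n ε U)).mpr ?_
      exact hP.add_mem n _ (hP.smul_mem n _ (hP.one_mem n) ε hε.le) _ hpos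

end
end

section
/- Let S be the inductive limit of an inductive sequence {S_k, φ_k : k ∈ ℕ} of operator systems, with canonical ucp maps φ^{(k)} : S_k → S. For x ∈ S_k and y ∈ S_l (k, l ∈ ℕ), one has φ^{(k)}(x) = φ^{(l)}(y) if and only if there exists p > k, l such that φ_{k,p}(x) = φ_{l,p}(y). -/
open scoped ComplexOrder TensorProduct

noncomputable section

/-! ## The inductive limit construction -/

variable (S : ℕ → PreOS) (φ : ∀ k, LinSU (S k) (S (k + 1)))

lemma hatSeq_succ (S : ℕ → PreOS) (φ : ∀ k, LinSU (S k) (S (k + 1)))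
    (k : ℕ) (x : (S k).V) (q : ℕ) (h : k ≤ q) :
    hatSeq S φ k x (q + 1) = (φ q).toLin (hatSeq S φ k x q) := by
  rw [hatSeq, hatSeq, dif_pos h, dif_pos (h.trans (Nat.le_succ q))]
  exact Nat.leRecOn_succ (C := fun m => (S m).V) (next := fun {m} y => (φ m).toLin y) h x

/-- `φ^{(k)}(x) = φ^{(l)}(y)` iff `φ_{k,p}(x) = φ_{l,p}(y)` for
some `p > k, l`. -/
theorem statement4 (S : ℕ → PreOS) (hS : ∀ k, (S k).IsOpSys)
    (φ : ∀ k, UCPmap (S k) (S (k + 1))) (k l : ℕ) (x : (S k).V) (y : (S l).V) :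
    limCan S (fun k => (φ k).toLinSU) k x = limCan S (fun k => (φ k).toLinSU) l y ↔
    ∃ (p : ℕ) (hk : k < p) (hl : l < p),
      towerFun S (fun k => (φ k).toLinSU) k p hk.le x
        = towerFun S (fun k => (φ k).toLinSU) l p hl.le y := by
  set ψ := fun k => (φ k).toLinSU with hψ
  constructor
  · intro h
    have hmem : (⟨hatSeq S ψ k x, hatSeq_mem S ψ k x⟩ : coh S ψ) -
        ⟨hatSeq S ψ l y, hatSeq_mem S ψ l y⟩ ∈ evK S ψ := by
      rwa [← Submodule.Quotient.eq]
    obtain ⟨k0, hk0⟩ := hmem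
    have hkp : k < max k0 (max k l) + 1 := by omega
    have hlp : l < max k0 (max k l) + 1 := by omega
    refine ⟨max k0 (max k l) + 1, hkp, hlp, ?_⟩
    have := hk0 (max k0 (max k l) + 1) (by omega)
    have h2 : hatSeq S ψ k x (max k0 (max k l) + 1)
        - hatSeq S ψ l y (max k0 (max k l) + 1) = 0 := this
    have h3 := sub_eq_zero.1 h2
    rwa [hatSeq, hatSeq, dif_pos hkp.le, dif_pos hlp.le] at h3
  · rintro ⟨p, hkp, hlp, heq⟩
    have key : ∀ q, p ≤ q → hatSeq S ψ k x q = hatSeq S ψ l y q := by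
      intro q hq
      induction q, hq using Nat.le_induction with
      | base =>
        rw [hatSeq, hatSeq, dif_pos hkp.le, dif_pos hlp.le]
        exact heq
      | succ q hq ih =>
        rw [hatSeq_succ S ψ k x q (hkp.le.trans hq),
          hatSeq_succ S ψ l y q (hlp.le.trans hq), ih]
    refine (Submodule.Quotient.eq _).2 ⟨p, fun q hq => ?_⟩
    show hatSeq S ψ k x q - hatSeq S ψ l y q = 0
    rw [key q hq, sub_self]

end
end

section
/- Let S be the inductive limit of an inductive sequence {S_k, φ_k : k ∈ ℕ} of operator systems, with canonical ucp maps φ^{(k)} : S_k → S. If T is an operator system and there exist ucp maps ψ^{(k)} : S_k → T such that ψ^{(k+1)} ∘ φ_k = ψ^{(k)} for all k ∈ ℕ, then there exists a unique ucp map Ψ : S → T such that Ψ ∘ φ^{(k)} = ψ^{(k)} for all k ∈ ℕ. -/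
open scoped ComplexOrder TensorProduct

noncomputable section

/-! ## The inductive limit construction -/

variable (S : ℕ → PreOS) (φ : ∀ k, LinSU (S k) (S (k + 1)))

/-! ## Auxiliary material for the universal property -/

section Universal

variable (T : PreOS) (ψ : ∀ k, UCPmap (S k) T)

/-- An index from which a coherent sequence is coherent. -/
def evIdx (x : coh S φ) : ℕ := Classical.choose x.2

lemma evIdx_spec (x : coh S φ) :
    ∀ k, evIdx S φ x ≤ k → x.1 (k + 1) = (φ k).toLin (x.1 k) :=
  Classical.choose_spec x.2

lemma psi_stable (hcomm : ∀ k x, (ψ (k + 1)).toLin ((φ k).toLin x) = (ψ k).toLin x)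
    (x : ∀ k, (S k).V) (k0 : ℕ)
    (h0 : ∀ k, k0 ≤ k → x (k + 1) = (φ k).toLin (x k)) :
    ∀ k, k0 ≤ k → (ψ k).toLin (x k) = (ψ k0).toLin (x k0) := by
  intro k hk
  induction k, hk using Nat.le_induction with
  | base => rfl
  | succ n hn ih => rw [h0 n hn, hcomm, ih]

/-- The eventual value of `ψ_k(x_k)` along a coherent sequence `x`. -/
def evVal (x : coh S φ) : T.V := (ψ (evIdx S φ x)).toLin (x.1 (evIdx S φ x))

lemma evVal_of (hcomm : ∀ k x, (ψ (k + 1)).toLin ((φ k).toLin x) = (ψ k).toLin x)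
    (x : coh S φ) (k0 : ℕ)
    (h0 : ∀ k, k0 ≤ k → x.1 (k + 1) = (φ k).toLin (x.1 k)) :
    evVal S φ T ψ x = (ψ k0).toLin (x.1 k0) := by
  have h1 := psi_stable S φ T ψ hcomm x.1 (evIdx S φ x) (evIdx_spec S φ x)
      (max (evIdx S φ x) k0) (le_max_left _ _)
  have h2 := psi_stable S φ T ψ hcomm x.1 k0 h0 (max (evIdx S φ x) k0) (le_max_right _ _)
  unfold evVal
  rw [← h1, h2]

/-- `evVal` as a linear map. -/
def evValLin (hcomm : ∀ k x, (ψ (k + 1)).toLin ((φ k).toLin x) = (ψ k).toLin x) :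
    coh S φ →ₗ[ℂ] T.V where
  toFun := evVal S φ T ψ
  map_add' x y := by
    have hx := evIdx_spec S φ x
    have hy := evIdx_spec S φ y
    have hxy : ∀ k, max (evIdx S φ x) (evIdx S φ y) ≤ k →
        (x + y).1 (k + 1) = (φ k).toLin ((x + y).1 k) := by
      intro k hk
      show x.1 (k + 1) + y.1 (k + 1) = (φ k).toLin (x.1 k + y.1 k)
      rw [hx k (le_trans (le_max_left _ _) hk), hy k (le_trans (le_max_right _ _) hk),
        map_add]
    rw [evVal_of S φ T ψ hcomm (x + y) _ hxy,
      evVal_of S φ T ψ hcomm x (max (evIdx S φ x) (evIdx S φ y))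
        (fun k hk => hx k (le_trans (le_max_left _ _) hk)),
      evVal_of S φ T ψ hcomm y (max (evIdx S φ x) (evIdx S φ y))
        (fun k hk => hy k (le_trans (le_max_right _ _) hk))]
    show (ψ _).toLin (x.1 _ + y.1 _) = _
    rw [map_add]
  map_smul' c x := by
    have hx := evIdx_spec S φ x
    have hcx : ∀ k, evIdx S φ x ≤ k → (c • x).1 (k + 1) = (φ k).toLin ((c • x).1 k) := by
      intro k hk
      show c • x.1 (k + 1) = (φ k).toLin (c • x.1 k)
      rw [hx k hk, map_smul]
    show evVal S φ T ψ (c • x) = (RingHom.id ℂ) c • evVal S φ T ψ x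
    rw [evVal_of S φ T ψ hcomm (c • x) _ hcx]
    show (ψ _).toLin (c • x.1 _) = (RingHom.id ℂ) c • evVal S φ T ψ x
    rw [map_smul]
    rfl

lemma evVal_ker (hcomm : ∀ k x, (ψ (k + 1)).toLin ((φ k).toLin x) = (ψ k).toLin x)
    (x : coh S φ) (hx : x ∈ evK S φ) : evVal S φ T ψ x = 0 := by
  obtain ⟨k0, h0⟩ := hx
  rw [evVal_of S φ T ψ hcomm x (max k0 (evIdx S φ x))
      (fun k hk => evIdx_spec S φ x k (le_trans (le_max_right _ _) hk)),
    h0 _ (le_max_left _ _), map_zero]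

/-- The induced linear map on the quotient `S'/K`. -/
def limMap (hcomm : ∀ k x, (ψ (k + 1)).toLin ((φ k).toLin x) = (ψ k).toLin x) :
    Qspace S φ →ₗ[ℂ] T.V :=
  Submodule.liftQ (evK S φ) (evValLin S φ T ψ hcomm)
    (fun x hx => LinearMap.mem_ker.2 (evVal_ker S φ T ψ hcomm x hx))

lemma limMap_mk (hcomm : ∀ k x, (ψ (k + 1)).toLin ((φ k).toLin x) = (ψ k).toLin x)
    (a : coh S φ) :
    limMap S φ T ψ hcomm (Submodule.Quotient.mk a) = evVal S φ T ψ a := rfl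

lemma hatSeq_coh (k : ℕ) (x : (S k).V) :
    ∀ l, k ≤ l → hatSeq S φ k x (l + 1) = (φ l).toLin (hatSeq S φ k x l) := by
  intro l hl
  rw [hatSeq, hatSeq, dif_pos hl, dif_pos (le_trans hl (Nat.le_succ l))]
  exact Nat.leRecOn_succ (C := fun m => (S m).V) (next := fun {m} y => (φ m).toLin y) hl x

lemma hatSeq_self (k : ℕ) (x : (S k).V) : hatSeq S φ k x k = x := by
  rw [hatSeq, dif_pos le_rfl]
  unfold towerFun
  exact Nat.leRecOn_self (C := fun m => (S m).V) (next := fun {m} y => (φ m).toLin y) x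

lemma limMap_limCan (hcomm : ∀ k x, (ψ (k + 1)).toLin ((φ k).toLin x) = (ψ k).toLin x)
    (k : ℕ) (x : (S k).V) :
    limMap S φ T ψ hcomm (limCan S φ k x) = (ψ k).toLin x := by
  have e : limMap S φ T ψ hcomm (limCan S φ k x)
      = evVal S φ T ψ ⟨hatSeq S φ k x, hatSeq_mem S φ k x⟩ := rfl
  rw [e, evVal_of S φ T ψ hcomm _ k (hatSeq_coh S φ k x)]
  show (ψ k).toLin (hatSeq S φ k x k) = _
  rw [hatSeq_self]

lemma hatSeq_eventually (a : coh S φ) (k0 : ℕ)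
    (h0 : ∀ k, k0 ≤ k → a.1 (k + 1) = (φ k).toLin (a.1 k)) :
    ∀ k, k0 ≤ k → hatSeq S φ k0 (a.1 k0) k = a.1 k := by
  intro k hk
  induction k, hk using Nat.le_induction with
  | base => exact hatSeq_self S φ k0 _
  | succ n hn ih => rw [hatSeq_coh S φ k0 _ n hn, ih, ← h0 n hn]

lemma mk_eq_limCan (a : coh S φ) :
    (Submodule.Quotient.mk a : Qspace S φ) = limCan S φ (evIdx S φ a) (a.1 (evIdx S φ a)) := by
  refine (Submodule.Quotient.eq _).2 ⟨evIdx S φ a, fun k hk => ?_⟩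
  show a.1 k - hatSeq S φ (evIdx S φ a) (a.1 (evIdx S φ a)) k = 0
  rw [hatSeq_eventually S φ a _ (evIdx_spec S φ a) k hk, sub_self]

lemma limMap_one (hcomm : ∀ k x, (ψ (k + 1)).toLin ((φ k).toLin x) = (ψ k).toLin x) :
    limMap S φ T ψ hcomm (limOne S φ) = T.one := by
  have e : limMap S φ T ψ hcomm (limOne S φ)
      = evVal S φ T ψ ⟨fun k => (S k).one, ⟨0, fun k _ => ((φ k).map_one).symm⟩⟩ := rfl
  rw [e, evVal_of S φ T ψ hcomm _ 0 (fun k _ => ((φ k).map_one).symm)]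
  exact (ψ 0).map_one

lemma limMap_star (hcomm : ∀ k x, (ψ (k + 1)).toLin ((φ k).toLin x) = (ψ k).toLin x)
    (u : Qspace S φ) :
    limMap S φ T ψ hcomm (star u) = star (limMap S φ T ψ hcomm u) := by
  obtain ⟨a, rfl⟩ := Submodule.Quotient.mk_surjective _ u
  rw [qspace_star_mk, limMap_mk, limMap_mk]
  have h1 : ∀ k, evIdx S φ a ≤ k → (star a).1 (k + 1) = (φ k).toLin ((star a).1 k) := by
    intro k hk
    show star (a.1 (k + 1)) = (φ k).toLin (star (a.1 k))
    rw [evIdx_spec S φ a k hk]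
    exact ((φ k).map_star _).symm
  rw [evVal_of S φ T ψ hcomm (star a) _ h1,
    evVal_of S φ T ψ hcomm a (evIdx S φ a) (evIdx_spec S φ a)]
  show (ψ (evIdx S φ a)).toLin (star (a.1 (evIdx S φ a)))
    = star ((ψ (evIdx S φ a)).toLin (a.1 (evIdx S φ a)))
  exact (ψ (evIdx S φ a)).map_star _

lemma limMap_pos (hT : T.IsOpSys)
    (hcomm : ∀ k x, (ψ (k + 1)).toLin ((φ k).toLin x) = (ψ k).toLin x) :
    ∀ n, ∀ U ∈ limPos S φ n, U.map (limMap S φ T ψ hcomm) ∈ T.pos n := by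
  intro n U hU
  have hstar : star (U.map ⇑(limMap S φ T ψ hcomm)) = U.map ⇑(limMap S φ T ψ hcomm) := by
    ext i j
    rw [Matrix.star_apply, Matrix.map_apply, Matrix.map_apply,
      ← limMap_star S φ T ψ hcomm, ← Matrix.star_apply, hU.1]
  refine hT.arch n _ hstar fun ε hε => ?_
  obtain ⟨-, A, ⟨hAst, k0, hA⟩, hAU⟩ := hU.2 ε hε
  have key : (ε : ℂ) • unitMat T.one n + U.map ⇑(limMap S φ T ψ hcomm)
      = (Matrix.of fun i j => (A i j).1 k0).map ⇑(ψ k0).toLin := by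
    ext i j
    have h1 : limMap S φ T ψ hcomm (((ε : ℂ) • unitMat (limOne S φ) n + U) i j)
        = (ψ k0).toLin ((A i j).1 k0) := by
      rw [← hAU i j, limMap_mk]
      exact evVal_of S φ T ψ hcomm (A i j) k0 (fun k hk => (hA k hk).1 i j)
    rw [Matrix.add_apply, Matrix.smul_apply, map_add, map_smul] at h1
    have h2 : limMap S φ T ψ hcomm (unitMat (limOne S φ) n i j) = unitMat T.one n i j := by
      by_cases hij : i = j
      · simp [unitMat, hij, limMap_one S φ T ψ hcomm]
      · simp [unitMat, hij]
    rw [h2] at h1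
    simpa [Matrix.add_apply, Matrix.smul_apply, Matrix.map_apply] using h1
  rw [key]
  exact (ψ k0).map_pos n _ (hA k0 le_rfl).2

lemma UCPmap_ext {P Q : PreOS} {f g : UCPmap P Q} (h : ∀ x, f.toLin x = g.toLin x) : f = g := by
  obtain ⟨⟨f1, _, _⟩, _⟩ := f
  obtain ⟨⟨g1, _, _⟩, _⟩ := g
  obtain rfl : f1 = g1 := LinearMap.ext h
  rfl

end Universal

/-- the universal property of the inductive limit: a compatible
sequence of ucp maps `ψ^{(k)} : S_k → T` factors uniquely through a ucp map
`Ψ : S → T` with `Ψ ∘ φ^{(k)} = ψ^{(k)}`. -/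
theorem statement5 (S : ℕ → PreOS) (hS : ∀ k, (S k).IsOpSys)
    (φ : ∀ k, UCPmap (S k) (S (k + 1)))
    (T : PreOS) (hT : T.IsOpSys)
    (ψ : ∀ k, UCPmap (S k) T)
    (hcomm : ∀ k x, (ψ (k + 1)).toLin ((φ k).toLin x) = (ψ k).toLin x) :
    ∃! Ψ : UCPmap (indLim S (fun k => (φ k).toLinSU)) T,
      ∀ k x, Ψ.toLin (limCan S (fun k => (φ k).toLinSU) k x) = (ψ k).toLin x := by
  refine ⟨⟨⟨limMap S (fun k => (φ k).toLinSU) T ψ hcomm,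
      limMap_star S (fun k => (φ k).toLinSU) T ψ hcomm,
      limMap_one S (fun k => (φ k).toLinSU) T ψ hcomm⟩,
      limMap_pos S (fun k => (φ k).toLinSU) T ψ hT hcomm⟩,
    fun k x => limMap_limCan S (fun k => (φ k).toLinSU) T ψ hcomm k x, ?_⟩
  intro Ψ' hΨ'
  refine UCPmap_ext fun u => ?_
  obtain ⟨a, rfl⟩ := Submodule.Quotient.mk_surjective _ u
  rw [mk_eq_limCan S (fun k => (φ k).toLinSU) a, hΨ']
  exact (limMap_limCan S (fun k => (φ k).toLinSU) T ψ hcomm _ _).symm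

end
end
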